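/- The rational-function identity: ((1+u)^g(1+v)^g / (1−(uv)^{2g−1})) · [ F(1, uv, 1/(uv))·(uv)^{2g−2} − F(1, uv, (uv)^2)·(uv)^g ] = ((1+u)^g(1+v)^g(1+u^2v)^g(1+uv^2)^g − (uv)^g(1+u)^{2g}(1+v)^{2g}) / ((1−uv)(1−(uv)^2)), where F(a,b,c) = (a+u)^g(a+v)^g/((a−b)(a−c)) + (b+u)^g(b+v)^g/((b−a)(b−c)) + (c+u)^g(c+v)^g/((c−a)(c−b)). -/

import Mathlib

open MvPolynomial

/-- `F(a,b,c) = (a+u)^g(a+v)^g/((a−b)(a−c)) + (b+u)^g(b+v)^g/((b−a)(b−c))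
  + (c+u)^g(c+v)^g/((c−a)(c−b))`. -/
noncomputable def Fres {K : Type*} [Field K] (g : ℕ) (u v a b c : K) : K :=
  (a + u) ^ g * (a + v) ^ g / ((a - b) * (a - c))
    + (b + u) ^ g * (b + v) ^ g / ((b - a) * (b - c))
    + (c + u) ^ g * (c + v) ^ g / ((c - a) * (c - b))

set_option maxHeartbeats 2000000 in
/-- Abstract form of the identity: with `w = uv`, `P = (1+u)^g(1+v)^g`,
`Q = (1+u²v)^g(1+uv²)^g` treated as independent field elements. -/
lemma hodge_poly_abstract {K : Type*} [Field K] (k : ℕ) (w P Q : K) (hw : w ≠ 0)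
    (hA : 1 - w ≠ 0) (hB : 1 + w ≠ 0) (hD : 1 - w ^ (2*k+3) ≠ 0) :
    P / (1 - w ^ (2*k+3)) *
      ((P / ((1 - w) * (1 - w⁻¹)) + w ^ (k+2) * P / ((w - 1) * (w - w⁻¹))
          + Q / (w ^ 2) ^ (k+2) / ((w⁻¹ - 1) * (w⁻¹ - w))) * w ^ (2*k+2)
        - (P / ((1 - w) * (1 - w ^ 2)) + w ^ (k+2) * P / ((w - 1) * (w - w ^ 2))
          + w ^ (k+2) * Q / ((w ^ 2 - 1) * (w ^ 2 - w))) * w ^ (k+2))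
    = (P * Q - w ^ (k+2) * P ^ 2) / ((1 - w) * (1 - w ^ 2)) := by
  have h5 : w - 1 ≠ 0 := fun h => hA (by linear_combination -h)
  have hC : (1:K) - w ^ 2 ≠ 0 := by
    have : (1:K) - w ^ 2 = (1 - w) * (1 + w) := by ring
    rw [this]; exact mul_ne_zero hA hB
  have h7 : w ^ 2 - 1 ≠ 0 := fun h => hC (by linear_combination -h)
  have h1 : 1 - w⁻¹ ≠ 0 := by
    have e : 1 - w⁻¹ = (w - 1) / w := by field_simp
    rw [e]; exact div_ne_zero h5 hw
  have h2 : w - w⁻¹ ≠ 0 := by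
    have e : w - w⁻¹ = (w ^ 2 - 1) / w := by field_simp
    rw [e]; exact div_ne_zero h7 hw
  have h3 : w⁻¹ - 1 ≠ 0 := fun h => h1 (by linear_combination -h)
  have h4 : w⁻¹ - w ≠ 0 := fun h => h2 (by linear_combination -h)
  have h6 : w - w ^ 2 ≠ 0 := by
    have e : w - w ^ 2 = w * (1 - w) := by ring
    rw [e]; exact mul_ne_zero hw hA
  have h8 : w ^ 2 - w ≠ 0 := fun h => h6 (by linear_combination -h)
  have e1 : P / ((1 - w) * (1 - w⁻¹)) = -(w * P) / ((1 - w) ^ 2) := by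
    rw [div_eq_div_iff (mul_ne_zero hA h1) (pow_ne_zero 2 hA)]
    field_simp
    ring
  have e2 : w ^ (k+2) * P / ((w - 1) * (w - w⁻¹)) = w ^ (k+3) * P / ((1 - w) ^ 2 * (1 + w)) := by
    rw [div_eq_div_iff (mul_ne_zero h5 h2) (mul_ne_zero (pow_ne_zero 2 hA) hB)]
    field_simp
    ring
  have e3 : Q / (w ^ 2) ^ (k+2) / ((w⁻¹ - 1) * (w⁻¹ - w))
      = Q / (w ^ (2*k+2) * ((1 - w) ^ 2 * (1 + w))) := by
    rw [div_div, div_eq_div_iff (mul_ne_zero (pow_ne_zero _ (pow_ne_zero 2 hw)) (mul_ne_zero h3 h4))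
      (mul_ne_zero (pow_ne_zero _ hw) (mul_ne_zero (pow_ne_zero 2 hA) hB))]
    field_simp
    ring
  rw [e1, e2, e3]
  have cancel : Q / (w ^ (2*k+2) * ((1 - w) ^ 2 * (1 + w))) * w ^ (2*k+2)
      = Q / ((1 - w) ^ 2 * (1 + w)) := by
    rw [div_mul_eq_mul_div, div_eq_div_iff
      (mul_ne_zero (pow_ne_zero _ hw) (mul_ne_zero (pow_ne_zero 2 hA) hB))
      (mul_ne_zero (pow_ne_zero 2 hA) hB)]
    ring
  rw [add_mul, add_mul, cancel]
  have hbracket :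
      (-(w * P) / (1 - w) ^ 2 * w ^ (2*k+2)
          + w ^ (k+3) * P / ((1 - w) ^ 2 * (1 + w)) * w ^ (2*k+2)
          + Q / ((1 - w) ^ 2 * (1 + w)))
        - (P / ((1 - w) * (1 - w ^ 2)) + w ^ (k+2) * P / ((w - 1) * (w - w ^ 2))
            + w ^ (k+2) * Q / ((w ^ 2 - 1) * (w ^ 2 - w))) * w ^ (k+2)
      = (1 - w ^ (2*k+3)) * (Q - w ^ (k+2) * P) / ((1 - w) * (1 - w ^ 2)) := by
    field_simp [hA, hB, hC, h5, h6, h7, h8]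
    ring
  rw [hbracket]
  rw [div_mul_div_comm, div_eq_div_iff (mul_ne_zero hD (mul_ne_zero hA hC)) (mul_ne_zero hA hC)]
  ring

set_option maxHeartbeats 4000000 in
/-- The rational-function identity
`((1+u)^g(1+v)^g/(1−(uv)^{2g−1})) · [F(1,uv,1/(uv))·(uv)^{2g−2} − F(1,uv,(uv)^2)·(uv)^g]
 = ((1+u)^g(1+v)^g(1+u²v)^g(1+uv²)^g − (uv)^g(1+u)^{2g}(1+v)^{2g}) / ((1−uv)(1−(uv)²))`
in the field of rational functions in the indeterminates `u`, `v`. -/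
theorem hodge_poly_M2d_identity (g : ℕ) (hg : 2 ≤ g) :
    ∀ (u v : FractionRing (MvPolynomial (Fin 2) ℚ)),
      u = algebraMap (MvPolynomial (Fin 2) ℚ) _ (X 0) →
      v = algebraMap (MvPolynomial (Fin 2) ℚ) _ (X 1) →
      ((1 + u) ^ g * (1 + v) ^ g / (1 - (u * v) ^ (2 * g - 1)))
          * (Fres g u v 1 (u * v) (u * v)⁻¹ * (u * v) ^ (2 * g - 2)
              - Fres g u v 1 (u * v) ((u * v) ^ 2) * (u * v) ^ g)
        = ((1 + u) ^ g * (1 + v) ^ g * (1 + u ^ 2 * v) ^ g * (1 + u * v ^ 2) ^ g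
              - (u * v) ^ g * (1 + u) ^ (2 * g) * (1 + v) ^ (2 * g))
            / ((1 - u * v) * (1 - (u * v) ^ 2)) := by
  obtain ⟨k, rfl⟩ : ∃ k, g = k + 2 := ⟨g - 2, by omega⟩
  intro u v hu hv
  have inj : Function.Injective
      (algebraMap (MvPolynomial (Fin 2) ℚ) (FractionRing (MvPolynomial (Fin 2) ℚ))) :=
    IsFractionRing.injective _ _
  have key : ∀ n : ℕ, ∀ c : ℚ, (4:ℚ)^n ≠ c →
      (u*v)^n ≠ algebraMap (MvPolynomial (Fin 2) ℚ) (FractionRing (MvPolynomial (Fin 2) ℚ))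
        (MvPolynomial.C c) := by
    intro n c hc h
    rw [hu, hv, ← map_mul, ← map_pow] at h
    have h2 := inj h
    have h3 := congrArg (eval fun _ => (2:ℚ)) h2
    simp [eval_pow, eval_mul, eval_X, eval_C] at h3
    apply hc
    norm_num at h3 ⊢
    linarith
  have hu0 : u ≠ 0 := by
    rw [hu]; exact fun h => X_ne_zero (0 : Fin 2) (inj (by simpa using h))
  have hv0 : v ≠ 0 := by
    rw [hv]; exact fun h => X_ne_zero (1 : Fin 2) (inj (by simpa using h))
  have hw : u * v ≠ 0 := mul_ne_zero hu0 hv0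
  have hne1 : u * v ≠ 1 := by
    have := key 1 1 (by norm_num); simpa using this
  have hnem1 : u * v ≠ -1 := by
    have := key 1 (-1) (by norm_num); simpa using this
  have hneD : (u * v)^(2*k+3) ≠ 1 := by
    have := key (2*k+3) 1 (one_lt_pow₀ (by norm_num) (by omega)).ne'
    simpa using this
  have hA : (1:FractionRing (MvPolynomial (Fin 2) ℚ)) - u * v ≠ 0 :=
    sub_ne_zero.mpr (Ne.symm hne1)
  have hB : (1:FractionRing (MvPolynomial (Fin 2) ℚ)) + u * v ≠ 0 := by
    intro h; exact hnem1 (by linear_combination h)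
  have hB' : (1:FractionRing (MvPolynomial (Fin 2) ℚ)) + u * v ≠ 0 := hB
  have hD : (1:FractionRing (MvPolynomial (Fin 2) ℚ)) - (u*v)^(2*k+3) ≠ 0 :=
    sub_ne_zero.mpr (Ne.symm hneD)
  have r1 : (u*v + u)^(k+2) * (u*v + v)^(k+2)
      = (u*v)^(k+2) * ((1+u)^(k+2) * (1+v)^(k+2)) := by
    rw [← mul_pow, ← mul_pow, ← mul_pow]; congr 1; ring
  have r2 : ((u*v)⁻¹ + u)^(k+2) * ((u*v)⁻¹ + v)^(k+2)
      = (1+u^2*v)^(k+2) * (1+u*v^2)^(k+2) / ((u*v)^2)^(k+2) := by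
    rw [← mul_pow, ← mul_pow, ← div_pow]; congr 1; field_simp
  have r3 : ((u*v)^2 + u)^(k+2) * ((u*v)^2 + v)^(k+2)
      = (u*v)^(k+2) * ((1+u^2*v)^(k+2) * (1+u*v^2)^(k+2)) := by
    rw [← mul_pow, ← mul_pow, ← mul_pow]; congr 1; ring
  have r4 : (1+u)^(k+2) * (1+v)^(k+2) * (1+u^2*v)^(k+2) * (1+u*v^2)^(k+2)
      = (1+u)^(k+2) * (1+v)^(k+2) * ((1+u^2*v)^(k+2) * (1+u*v^2)^(k+2)) := by ring
  have r5 : (u*v)^(k+2) * (1+u)^(2*(k+2)) * (1+v)^(2*(k+2))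
      = (u*v)^(k+2) * ((1+u)^(k+2) * (1+v)^(k+2))^2 := by ring
  simp only [Fres, r1, r2, r3,
    show 2*(k+2)-1 = 2*k+3 from by omega, show 2*(k+2)-2 = 2*k+2 from by omega]
  rw [r4, r5]
  exact hodge_poly_abstract k (u*v) ((1+u)^(k+2) * (1+v)^(k+2))
    ((1+u^2*v)^(k+2) * (1+u*v^2)^(k+2)) hw hA hB hD
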